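/- arXiv:2412.10836 — 3 statements merged into one kernel-verified Lean document; each statement's English description precedes it below -/
import Mathlib

section
/- Let (a_n)_{n≥1} be a sequence of nonnegative reals. The following are equivalent: (1) there exists c₁ > 0 such that ∑_{n=1}^∞ (1 − (1 − r)^(n/2)) · a_n ≤ c₁ · r for all r ∈ [0, 1]; (2) there exists c₂ > 0 such that ∑_{n=1}^∞ n · a_n ≤ c₂. Moreover, in the implication (1) ⇒ (2) one may take c₂ = 2c₁, and in (2) ⇒ (1) one may take c₁ = c₂. -/
/-!
Both directions compare `1 - (1 - r) ^ p` with `p * r`. Since `2p = n + 1 ≥ 1`, Bernoulli's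
inequality gives `1 - (1 - r) ^ p ≤ 1 - (1 - r) ^ (2p) ≤ 2p r`, which yields (2) ⇒ (1) with
`c₁ = c₂`. Conversely, `r ↦ 1 - (1 - r) ^ p` has derivative `p` at `0`, so dividing a finite
partial sum of (1) by `r` and letting `r → 0⁺` gives `∑ (n + 1) / 2 * a n ≤ c₁`.
-/

open Filter Topology Finset

lemma one_sub_one_sub_rpow_le_mul {r p q : ℝ} (hr0 : 0 ≤ r) (hr1 : r ≤ 1) (hp : 0 ≤ p)
    (hpq : p ≤ q) (hq : 1 ≤ q) : 1 - (1 - r) ^ p ≤ q * r := by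
  have hmono : (1 - r) ^ q ≤ (1 - r) ^ p :=
    Real.rpow_le_rpow_of_exponent_ge' (by linarith) (by linarith) hp hpq
  have hbernoulli : 1 + q * -r ≤ (1 + -r) ^ q :=
    one_add_mul_self_le_rpow_one_add (by linarith) hq
  rw [← sub_eq_add_neg] at hbernoulli
  linarith

lemma one_sub_one_sub_rpow_nonneg {r p : ℝ} (hr0 : 0 ≤ r) (hr1 : r ≤ 1) (hp : 0 ≤ p) :
    0 ≤ 1 - (1 - r) ^ p :=
  sub_nonneg.mpr (Real.rpow_le_one (by linarith) (by linarith) hp)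

lemma tendsto_one_sub_one_sub_rpow_div (p : ℝ) :
    Tendsto (fun r : ℝ => (1 - (1 - r) ^ p) / r) (𝓝[>] 0) (𝓝 p) := by
  have hderiv : HasDerivAt (fun r : ℝ => 1 - (1 - r) ^ p) p 0 := by
    simpa using (((hasDerivAt_id (0 : ℝ)).const_sub 1).rpow_const
      (p := p) (Or.inl (by norm_num))).const_sub 1
  refine ((hasDerivAt_iff_tendsto_slope_zero.mp hderiv).mono_left
    (nhdsWithin_mono 0 fun _ hr => ne_of_gt hr)).congr fun r => ?_
  simp [div_eq_inv_mul]

lemma sum_mul_le_of_sum_one_sub_one_sub_rpow_le {ι : Type*} (s : Finset ι) (p a : ι → ℝ)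
    {c : ℝ}
    (h : ∀ r ∈ Set.Ioc (0 : ℝ) 1, ∑ i ∈ s, (1 - (1 - r) ^ p i) * a i ≤ c * r) :
    ∑ i ∈ s, p i * a i ≤ c := by
  have hlim : Tendsto (fun r : ℝ => ∑ i ∈ s, (1 - (1 - r) ^ p i) / r * a i)
      (𝓝[>] 0) (𝓝 (∑ i ∈ s, p i * a i)) :=
    tendsto_finsetSum s fun i _ => (tendsto_one_sub_one_sub_rpow_div (p i)).mul_const (a i)
  refine le_of_tendsto hlim (mem_of_superset (Ioc_mem_nhdsGT zero_lt_one) fun r hr => ?_)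
  simp_rw [div_mul_eq_mul_div, ← sum_div]
  exact (div_le_iff₀ hr.1).mpr (h r hr)

lemma ENNReal.tsum_ofReal_le_ofReal_iff {f : ℕ → ℝ} (hf : ∀ n, 0 ≤ f n) {c : ℝ}
    (hc : 0 ≤ c) :
    ∑' n, ENNReal.ofReal (f n) ≤ ENNReal.ofReal c ↔ ∀ N, ∑ n ∈ range N, f n ≤ c := by
  have hsum (N : ℕ) :
      ∑ n ∈ range N, ENNReal.ofReal (f n) = ENNReal.ofReal (∑ n ∈ range N, f n) :=
    (ENNReal.ofReal_sum_of_nonneg fun n _ => hf n).symm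
  constructor
  · intro h N
    rw [← ENNReal.ofReal_le_ofReal_iff hc, ← hsum]
    exact (ENNReal.sum_le_tsum _).trans h
  · intro h
    exact ENNReal.tsum_le_of_sum_range_le fun N =>
      (hsum N).trans_le (ENNReal.ofReal_le_ofReal (h N))

lemma tsum_succ_mul_le_of_tsum_one_sub_one_sub_rpow_le (a : ℕ → ℝ) (ha : ∀ n, 0 ≤ a n)
    {c : ℝ} (hc : 0 ≤ c)
    (h : ∀ r ∈ Set.Icc (0 : ℝ) 1,
      ∑' n : ℕ, ENNReal.ofReal ((1 - (1 - r) ^ (((n : ℝ) + 1) / 2)) * a n)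
        ≤ ENNReal.ofReal (c * r)) :
    ∑' n : ℕ, ENNReal.ofReal (((n : ℝ) + 1) * a n) ≤ ENNReal.ofReal (2 * c) := by
  refine (ENNReal.tsum_ofReal_le_ofReal_iff (fun n => mul_nonneg (by positivity) (ha n))
    (by positivity)).mpr fun N => ?_
  have hpartial (r : ℝ) (hr : r ∈ Set.Ioc (0 : ℝ) 1) :
      ∑ n ∈ range N, (1 - (1 - r) ^ (((n : ℝ) + 1) / 2)) * a n ≤ c * r := by
    have hr0 : 0 ≤ r := hr.1.le
    refine (ENNReal.tsum_ofReal_le_ofReal_iff (fun n => mul_nonneg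
      (one_sub_one_sub_rpow_nonneg hr0 hr.2 (by positivity)) (ha n)) (by positivity)).mp ?_ N
    exact h r (Set.Ioc_subset_Icc_self hr)
  have hhalf : ∑ n ∈ range N, ((n : ℝ) + 1) / 2 * a n ≤ c :=
    sum_mul_le_of_sum_one_sub_one_sub_rpow_le _ _ _ hpartial
  calc ∑ n ∈ range N, ((n : ℝ) + 1) * a n
        = 2 * ∑ n ∈ range N, ((n : ℝ) + 1) / 2 * a n := by
        rw [mul_sum]; exact sum_congr rfl fun n _ => by ring
    _ ≤ 2 * c := by linarith

lemma tsum_one_sub_one_sub_rpow_le_of_tsum_succ_mul_le (a : ℕ → ℝ) (ha : ∀ n, 0 ≤ a n)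
    {c : ℝ} (hc : 0 ≤ c)
    (h : ∑' n : ℕ, ENNReal.ofReal (((n : ℝ) + 1) * a n) ≤ ENNReal.ofReal c)
    {r : ℝ} (hr0 : 0 ≤ r) (hr1 : r ≤ 1) :
    ∑' n : ℕ, ENNReal.ofReal ((1 - (1 - r) ^ (((n : ℝ) + 1) / 2)) * a n)
      ≤ ENNReal.ofReal (c * r) := by
  have hsucc := (ENNReal.tsum_ofReal_le_ofReal_iff
    (fun n => mul_nonneg (by positivity) (ha n)) hc).mp h
  refine (ENNReal.tsum_ofReal_le_ofReal_iff (fun n => mul_nonneg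
    (one_sub_one_sub_rpow_nonneg hr0 hr1 (by positivity)) (ha n)) (by positivity)).mpr
    fun N => ?_
  calc ∑ n ∈ range N, (1 - (1 - r) ^ (((n : ℝ) + 1) / 2)) * a n
      ≤ ∑ n ∈ range N, ((n : ℝ) + 1) * r * a n := by
        refine sum_le_sum fun n _ => mul_le_mul_of_nonneg_right ?_ (ha n)
        exact one_sub_one_sub_rpow_le_mul hr0 hr1 (by positivity) (by linarith) (by simp)
    _ = r * ∑ n ∈ range N, ((n : ℝ) + 1) * a n := by
        rw [mul_sum]; exact sum_congr rfl fun n _ => by ring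
    _ ≤ c * r := by rw [mul_comm c]; exact mul_le_mul_of_nonneg_left (hsucc N) hr0

theorem stmt3 (a : ℕ → ℝ) (ha : ∀ n, 0 ≤ a n) :
    ((∃ c₁ > (0 : ℝ), ∀ r ∈ Set.Icc (0 : ℝ) 1,
        ∑' n : ℕ, ENNReal.ofReal ((1 - (1 - r) ^ (((n : ℝ) + 1) / 2)) * a n)
          ≤ ENNReal.ofReal (c₁ * r)) ↔
      (∃ c₂ > (0 : ℝ),
        ∑' n : ℕ, ENNReal.ofReal (((n : ℝ) + 1) * a n) ≤ ENNReal.ofReal c₂))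
    ∧ (∀ c₁ > (0 : ℝ),
        (∀ r ∈ Set.Icc (0 : ℝ) 1,
          ∑' n : ℕ, ENNReal.ofReal ((1 - (1 - r) ^ (((n : ℝ) + 1) / 2)) * a n)
            ≤ ENNReal.ofReal (c₁ * r)) →
        ∑' n : ℕ, ENNReal.ofReal (((n : ℝ) + 1) * a n) ≤ ENNReal.ofReal (2 * c₁))
    ∧ (∀ c₂ > (0 : ℝ),
        (∑' n : ℕ, ENNReal.ofReal (((n : ℝ) + 1) * a n) ≤ ENNReal.ofReal c₂) →
        ∀ r ∈ Set.Icc (0 : ℝ) 1,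
          ∑' n : ℕ, ENNReal.ofReal ((1 - (1 - r) ^ (((n : ℝ) + 1) / 2)) * a n)
            ≤ ENNReal.ofReal (c₂ * r)) := by
  have h12 := fun c₁ (hc₁ : 0 < c₁) =>
    tsum_succ_mul_le_of_tsum_one_sub_one_sub_rpow_le a ha hc₁.le
  have h21 := fun c₂ (hc₂ : 0 < c₂) H r (hr : r ∈ Set.Icc (0 : ℝ) 1) =>
    tsum_one_sub_one_sub_rpow_le_of_tsum_succ_mul_le a ha hc₂.le H hr.1 hr.2
  refine ⟨⟨?_, ?_⟩, h12, h21⟩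
  · rintro ⟨c₁, hc₁, H⟩
    exact ⟨2 * c₁, by positivity, h12 c₁ hc₁ H⟩
  · rintro ⟨c₂, hc₂, H⟩
    exact ⟨c₂, hc₂, h21 c₂ hc₂ H⟩
end

section
/- Let 0 ≤ c ≤ s, let D : [c, s] → ℝ be measurable and bounded, let 1 < p < q < ∞ and q − p + 1 ≤ ρ ≤ q, and let K > 0. Set α := q/(q − p) and β with 1 = 1/α + 1/β, and D*(s) := sup_{u ∈ [c, s]} |D(u)|. Then (∫_c^s |D(u)|^ρ du)^(p/q) ≤ (1/K)^α · (D*(s))^p + K^β · ∫_c^s (|D(u)| + |D(u)|^p) du. -/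
/-!
Pointwise `|D u| ^ ρ ≤ D* ^ (q - p) * (|D u| + |D u| ^ p)`: where `|D u| ≤ 1` lower the exponent
to `q - p + 1`, where `|D u| > 1` raise it to `q`. Integrating and taking the power
`p / q = 1 / β` gives `(D* ^ p) ^ (1 / α) * I ^ (1 / β)` with `I = ∫ (|D| + |D| ^ p)`, since
`1 / α = (q - p) / q`. Young's inequality, applied to the two factors rescaled by `1 / K` and `K`,
splits this product into the two terms on the right.
-/

open MeasureTheory Real Set

namespace Real

lemma rpow_le_rpow_sub_mul_add_rpow {x d p q ρ : ℝ} (hx : 0 ≤ x) (hxd : x ≤ d)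
    (hpq : p ≤ q) (hρ₁ : q - p + 1 ≤ ρ) (hρ₂ : ρ ≤ q) :
    x ^ ρ ≤ d ^ (q - p) * (x + x ^ p) := by
  have hd : 0 ≤ d := hx.trans hxd
  have hpow : x ^ (q - p) ≤ d ^ (q - p) := rpow_le_rpow hx hxd (by linarith)
  rcases hx.eq_or_lt with rfl | hx₀
  · rw [zero_rpow (by linarith)]
    exact mul_nonneg (rpow_nonneg hd _) (by positivity)
  rcases le_or_gt x 1 with hx₁ | hx₁
  · calc x ^ ρ ≤ x ^ (q - p + 1) := rpow_le_rpow_of_exponent_ge hx₀ hx₁ hρ₁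
      _ = x ^ (q - p) * x := by rw [rpow_add hx₀, rpow_one]
      _ ≤ d ^ (q - p) * (x + x ^ p) := by gcongr; linarith [rpow_nonneg hx p]
  · calc x ^ ρ ≤ x ^ q := rpow_le_rpow_of_exponent_le hx₁.le hρ₂
      _ = x ^ (q - p) * x ^ p := by rw [← rpow_add hx₀, sub_add_cancel]
      _ ≤ d ^ (q - p) * (x + x ^ p) := by gcongr; linarith

lemma rpow_one_div_mul_rpow_one_div_le {a b α β : ℝ} (ha : 0 ≤ a) (hb : 0 ≤ b)
    (hαβ : α.HolderConjugate β) {K : ℝ} (hK : 0 < K) :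
    a ^ (1 / α) * b ^ (1 / β) ≤ (1 / K) ^ α * a + K ^ β * b := by
  have young := young_inequality_of_nonneg (a := 1 / K * a ^ (1 / α)) (b := K * b ^ (1 / β))
    (by positivity) (by positivity) hαβ
  rw [mul_rpow (by positivity) (by positivity), mul_rpow hK.le (by positivity),
    ← rpow_mul ha, ← rpow_mul hb, one_div_mul_cancel hαβ.ne_zero,
    one_div_mul_cancel hαβ.symm.ne_zero, rpow_one, rpow_one] at young
  calc a ^ (1 / α) * b ^ (1 / β) = 1 / K * a ^ (1 / α) * (K * b ^ (1 / β)) := by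
        field_simp
    _ ≤ (1 / K) ^ α * a / α + K ^ β * b / β := young
    _ ≤ (1 / K) ^ α * a + K ^ β * b := by
        gcongr
        · exact div_le_self (by positivity) hαβ.lt.le
        · exact div_le_self (by positivity) hαβ.symm.lt.le

end Real

lemma integral_abs_rpow_le_mul_integral {X : Type*} [MeasurableSpace X] {μ : Measure X}
    [IsFiniteMeasure μ] {f : X → ℝ} (hf : AEStronglyMeasurable f μ) {d p q ρ : ℝ}
    (hfd : ∀ᵐ x ∂μ, |f x| ≤ d) (hp : 0 ≤ p) (hpq : p ≤ q) (hρ₁ : q - p + 1 ≤ ρ) (hρ₂ : ρ ≤ q) :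
    ∫ x, |f x| ^ ρ ∂μ ≤ d ^ (q - p) * ∫ x, (|f x| + |f x| ^ p) ∂μ := by
  have hρ : 0 ≤ ρ := by linarith
  have hint : Integrable (fun x ↦ |f x| + |f x| ^ p) μ := by
    refine .of_bound (by fun_prop) (d + d ^ p) (hfd.mono fun x hx ↦ ?_)
    rw [norm_of_nonneg (by positivity)]
    gcongr
  rw [← integral_const_mul]
  refine integral_mono_ae (.of_bound (by fun_prop) (d ^ ρ) (hfd.mono fun x hx ↦ ?_))
    (hint.const_mul _) (hfd.mono fun x hx ↦ ?_)
  · rw [norm_of_nonneg (by positivity)]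
    gcongr
  · exact rpow_le_rpow_sub_mul_add_rpow (abs_nonneg _) hx hpq hρ₁ hρ₂

theorem stmt6_general (c s : ℝ) (hcs : c ≤ s)
    (D : ℝ → ℝ) (hD : Measurable D) (M : ℝ) (hbd : ∀ u, |D u| ≤ M)
    (ρ q p K α β : ℝ) (hp : 1 < p) (hpq : p < q) (hρ1 : q - p + 1 ≤ ρ) (hρ2 : ρ ≤ q)
    (hK : 0 < K) (hα : α = q / (q - p)) (hβ : 1 = 1 / α + 1 / β) :
    (∫ u in Set.Icc c s, |D u| ^ ρ) ^ (p / q)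
      ≤ (1 / K) ^ α * (⨆ u ∈ Set.Icc c s, |D u|) ^ p
        + K ^ β * ∫ u in Set.Icc c s, (|D u| + |D u| ^ p) := by
  set Dstar := ⨆ u ∈ Icc c s, |D u|
  set I := ∫ u in Icc c s, (|D u| + |D u| ^ p)
  have hDstar : ∀ u ∈ Icc c s, |D u| ≤ Dstar := fun u hu ↦
    le_ciSup₂ (f := fun u (_ : u ∈ Icc c s) ↦ |D u|)
      ⟨M, by rintro _ ⟨_, ⟨u, ⟨_, rfl⟩⟩, ⟨_, rfl⟩⟩; exact hbd u⟩ u hu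
  have hDstar₀ : 0 ≤ Dstar := (abs_nonneg _).trans (hDstar c ⟨le_rfl, hcs⟩)
  have hI₀ : 0 ≤ I := integral_nonneg fun u ↦ by positivity
  have hα' : 1 / α = (q - p) / q := by rw [hα, one_div_div]
  have hβ' : 1 / β = p / q := by
    rw [eq_sub_of_add_eq' hβ.symm, hα']; field_simp [(by linarith : q ≠ 0)]; ring
  have hαβ : α.HolderConjugate β := by
    refine holderConjugate_iff.mpr ⟨?_, by simpa only [one_div] using hβ.symm⟩
    rw [hα, one_lt_div (by linarith)]; linarith
  have hint : ∫ u in Icc c s, |D u| ^ ρ ≤ Dstar ^ (q - p) * I :=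
    integral_abs_rpow_le_mul_integral (μ := volume.restrict (Icc c s)) hD.aestronglyMeasurable
      ((ae_restrict_iff' measurableSet_Icc).mpr (.of_forall hDstar)) (by linarith) hpq.le hρ1 hρ2
  calc (∫ u in Icc c s, |D u| ^ ρ) ^ (p / q)
      ≤ (Dstar ^ (q - p) * I) ^ (p / q) := by
        gcongr
        exact div_nonneg (by linarith) (by linarith)
    _ = (Dstar ^ p) ^ (1 / α) * I ^ (1 / β) := by
        rw [mul_rpow (by positivity) hI₀, ← rpow_mul hDstar₀, ← rpow_mul hDstar₀, hα', hβ']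
        ring_nf
    _ ≤ (1 / K) ^ α * Dstar ^ p + K ^ β * I :=
        rpow_one_div_mul_rpow_one_div_le (by positivity) hI₀ hαβ hK

theorem stmt6 (c s : ℝ) (hc : 0 ≤ c) (hcs : c ≤ s)
    (D : ℝ → ℝ) (hD : Measurable D) (M : ℝ) (hbd : ∀ u, |D u| ≤ M)
    (ρ q p K α β : ℝ) (hp : 1 < p) (hpq : p < q) (hρ1 : q - p + 1 ≤ ρ) (hρ2 : ρ ≤ q)
    (hK : 0 < K) (hα : α = q / (q - p)) (hβ : 1 = 1 / α + 1 / β) :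
    (∫ u in Set.Icc c s, |D u| ^ ρ) ^ (p / q)
      ≤ (1 / K) ^ α * (⨆ u ∈ Set.Icc c s, |D u|) ^ p
        + K ^ β * ∫ u in Set.Icc c s, (|D u| + |D u| ^ p) :=
  stmt6_general c s hcs D hD M hbd ρ q p K α β hp hpq hρ1 hρ2 hK hα hβ
end

section
/- Fix θ ∈ (0, 1) and n ∈ ℕ, and let S_n^θ be as defined via S_n^θ(x) := 2^{−(n+1)(θ−1)} ∫_0^{|x|} r_n(y) dy, where r_n is the Rademacher-type step function r_n(y) = ∑_{i=1}^∞ (1_{((2i−2)/2^{n+1},(2i−1)/2^{n+1}]}(y) − 1_{((2i−1)/2^{n+1},(2i)/2^{n+1}]}(y)). Then the θ-Hölder seminorm of S_n^θ equals 1, i.e. sup_{x ≠ y} |S_n^θ(x) − S_n^θ(y)|/|x − y|^θ = 1. -/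
/-!
With `h = 2^{-(n+1)}`, `r_n` is the square wave equal to `(-1)^k` on `(k h, (k+1) h]`,
so `F t = ∫₀ᵗ r_n` is a triangle wave: it is `1`-Lipschitz and takes values in `[0, h]`. Hence
`|S x - S y| ≤ h^{θ-1} min(h, |x - y|) ≤ h^{θ-1} h^{1-θ} |x - y|^θ = |x - y|^θ`, and the pair
`(h, 0)` attains the quotient `h^{θ-1} h / h^θ = 1`.
-/

open MeasureTheory Set intervalIntegral
open scoped Interval

theorem eq_of_mem_Ioc_natCast_mul {h y : ℝ} (hh : 0 < h) {j k : ℕ}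
    (hj : y ∈ Ioc (j * h) ((j + 1) * h)) (hk : y ∈ Ioc (k * h) ((k + 1) * h)) : j = k := by
  have hjk : (j : ℝ) < k + 1 := lt_of_mul_lt_mul_right (hj.1.trans_le hk.2) hh.le
  have hkj : (k : ℝ) < j + 1 := lt_of_mul_lt_mul_right (hk.1.trans_le hj.2) hh.le
  norm_cast at hjk hkj
  omega

theorem exists_mem_Ioc_natCast_mul {h t : ℝ} (hh : 0 < h) (ht : 0 < t) :
    ∃ k : ℕ, t ∈ Ioc (k * h) ((k + 1) * h) := by
  have hpos : 1 ≤ ⌈t / h⌉₊ := Nat.one_le_ceil_iff.2 (div_pos ht hh)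
  refine ⟨⌈t / h⌉₊ - 1, ?_, ?_⟩
  · rw [Nat.cast_sub hpos, Nat.cast_one, ← lt_div_iff₀ hh]
    linarith [Nat.ceil_lt_add_one (div_pos ht hh).le]
  · rw [Nat.cast_sub hpos, Nat.cast_one, sub_add_cancel, ← div_le_iff₀ hh]
    exact Nat.le_ceil _

theorem min_le_rpow_mul_rpow {a b θ : ℝ} (ha : 0 ≤ a) (hb : 0 ≤ b) (hθ0 : 0 ≤ θ)
    (hθ1 : θ ≤ 1) : min a b ≤ a ^ (1 - θ) * b ^ θ := by
  have hm : 0 ≤ min a b := le_min ha hb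
  calc min a b = min a b ^ (1 - θ) * min a b ^ θ := by
        rw [← Real.rpow_add' hm (by norm_num), sub_add_cancel, Real.rpow_one]
    _ ≤ a ^ (1 - θ) * b ^ θ := by
        have h1θ : 0 ≤ 1 - θ := by linarith
        gcongr
        exacts [min_le_left a b, min_le_right a b]

def IsSquareWave (r : ℝ → ℝ) (h : ℝ) : Prop :=
  ∀ k : ℕ, ∀ y ∈ Ioc (k * h) ((k + 1) * h), r y = (-1) ^ k

namespace IsSquareWave

variable {r : ℝ → ℝ} {h : ℝ} (hr : IsSquareWave r h)
include hr

theorem eqOn_neg_one_pow {k : ℕ} {a b : ℝ} (ha : k * h ≤ a) (hab : a ≤ b)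
    (hb : b ≤ (k + 1) * h) : EqOn r (fun _ => (-1) ^ k) (Ι a b) := by
  rw [uIoc_of_le hab]
  exact fun y hy => hr k y (Ioc_subset_Ioc ha hb hy)

theorem intervalIntegrable_of_le_of_le {k : ℕ} {a b : ℝ} (ha : k * h ≤ a) (hab : a ≤ b)
    (hb : b ≤ (k + 1) * h) : IntervalIntegrable r volume a b :=
  intervalIntegrable_iff.2 <| (integrableOn_const measure_Ioc_lt_top.ne).congr_fun
    (hr.eqOn_neg_one_pow ha hab hb).symm measurableSet_uIoc

theorem integral_eq_neg_one_pow_mul {k : ℕ} {a b : ℝ} (ha : k * h ≤ a) (hab : a ≤ b)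
    (hb : b ≤ (k + 1) * h) : ∫ y in a..b, r y = (-1) ^ k * (b - a) := by
  rw [integral_congr_ae (ae_of_all _ (hr.eqOn_neg_one_pow ha hab hb)),
    intervalIntegral.integral_const, smul_eq_mul, mul_comm]

theorem intervalIntegrable_zero_natCast_mul (hh : 0 < h) (k : ℕ) :
    IntervalIntegrable r volume 0 (k * h) := by
  induction k with
  | zero => simp
  | succ k ih =>
    push_cast
    exact ih.trans (hr.intervalIntegrable_of_le_of_le le_rfl (by linarith) le_rfl)

theorem integral_zero_natCast_mul (hh : 0 < h) (k : ℕ) :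
    ∫ y in (0 : ℝ)..k * h, r y = (1 - (-1) ^ k) / 2 * h := by
  induction k with
  | zero => simp
  | succ k ih =>
    push_cast
    rw [← integral_add_adjacent_intervals (hr.intervalIntegrable_zero_natCast_mul hh k)
      (hr.intervalIntegrable_of_le_of_le le_rfl (by linarith) le_rfl), ih,
      hr.integral_eq_neg_one_pow_mul le_rfl (by linarith) le_rfl]
    ring

theorem abs_le_one_of_pos (hh : 0 < h) {y : ℝ} (hy : 0 < y) : |r y| ≤ 1 := by
  obtain ⟨k, hk⟩ := exists_mem_Ioc_natCast_mul hh hy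
  simp [hr k y hk]

theorem intervalIntegrable_zero (hh : 0 < h) {t : ℝ} (ht : 0 ≤ t) :
    IntervalIntegrable r volume 0 t := by
  rcases ht.eq_or_lt with rfl | ht
  · exact IntervalIntegrable.refl
  obtain ⟨k, hk⟩ := exists_mem_Ioc_natCast_mul hh ht
  exact (hr.intervalIntegrable_zero_natCast_mul hh k).trans
    (hr.intervalIntegrable_of_le_of_le le_rfl hk.1.le hk.2)

theorem integral_zero_mem_Icc (hh : 0 < h) {t : ℝ} (ht : 0 ≤ t) :
    ∫ y in (0 : ℝ)..t, r y ∈ Icc 0 h := by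
  rcases ht.eq_or_lt with rfl | ht
  · simpa using hh.le
  obtain ⟨k, hk⟩ := exists_mem_Ioc_natCast_mul hh ht
  rw [← integral_add_adjacent_intervals (hr.intervalIntegrable_zero_natCast_mul hh k)
    (hr.intervalIntegrable_of_le_of_le le_rfl hk.1.le hk.2), hr.integral_zero_natCast_mul hh,
    hr.integral_eq_neg_one_pow_mul le_rfl hk.1.le hk.2]
  rcases neg_one_pow_eq_or ℝ k with hk1 | hk1 <;> rw [hk1] <;> constructor <;>
    nlinarith [hk.1, hk.2]

theorem abs_integral_zero_sub_le_min (hh : 0 < h) {a b : ℝ} (ha : 0 ≤ a) (hb : 0 ≤ b) :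
    |(∫ y in (0 : ℝ)..b, r y) - ∫ y in (0 : ℝ)..a, r y| ≤ min h |b - a| := by
  refine le_min ?_ ?_
  · have hFa := hr.integral_zero_mem_Icc hh ha
    have hFb := hr.integral_zero_mem_Icc hh hb
    rw [abs_sub_le_iff]
    constructor <;> linarith [hFa.1, hFa.2, hFb.1, hFb.2]
  · rw [integral_interval_sub_left (hr.intervalIntegrable_zero hh hb)
      (hr.intervalIntegrable_zero hh ha)]
    simpa using norm_integral_le_of_norm_le_const (C := 1) (f := r) fun y hy =>
      (Real.norm_eq_abs _).trans_le (hr.abs_le_one_of_pos hh ((le_min ha hb).trans_lt hy.1))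

end IsSquareWave

theorem sSup_abs_sub_div_rpow_eq_one {S : ℝ → ℝ} {h θ : ℝ} (hh : 0 < h) (hθ0 : 0 ≤ θ)
    (hθ1 : θ ≤ 1) (hS : ∀ x y, |S x - S y| ≤ h ^ (θ - 1) * min h |x - y|) (hS0 : S 0 = 0)
    (hSh : S h = h ^ θ) :
    sSup {v : ℝ | ∃ x y : ℝ, x ≠ y ∧ v = |S x - S y| / |x - y| ^ θ} = 1 := by
  have hhθ : 0 < h ^ θ := Real.rpow_pos_of_pos hh θ
  refine IsGreatest.csSup_eq ⟨⟨h, 0, hh.ne', ?_⟩, ?_⟩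
  · rw [hSh, hS0, sub_zero, sub_zero, abs_of_pos hh, abs_of_pos hhθ, div_self hhθ.ne']
  rintro v ⟨x, y, hxy, rfl⟩
  rw [div_le_one (Real.rpow_pos_of_pos (abs_pos.2 (sub_ne_zero.2 hxy)) θ)]
  calc |S x - S y| ≤ h ^ (θ - 1) * min h |x - y| := hS x y
    _ ≤ h ^ (θ - 1) * (h ^ (1 - θ) * |x - y| ^ θ) := by
        gcongr
        exact min_le_rpow_mul_rpow hh.le (abs_nonneg _) hθ0 hθ1
    _ = |x - y| ^ θ := by rw [← mul_assoc, ← Real.rpow_add hh]; simp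

theorem tsum_indicator_sub_indicator_eq_neg_one_pow {c y : ℝ} (hc : 0 < c)
    {k : ℕ} (hy : y ∈ Ioc (k * c⁻¹) ((k + 1) * c⁻¹)) :
    ∑' i : ℕ,
      ((Ioc ((2 * (i : ℝ)) / c) ((2 * (i : ℝ) + 1) / c)).indicator (fun _ => (1 : ℝ)) y
        - (Ioc ((2 * (i : ℝ) + 1) / c) ((2 * (i : ℝ) + 2) / c)).indicator (fun _ => (1 : ℝ)) y)
      = (-1) ^ k := by
  have hcell : ∀ j : ℕ, (Ioc (j * c⁻¹) ((j + 1) * c⁻¹)).indicator (fun _ => (1 : ℝ)) y =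
      if j = k then 1 else 0 := by
    intro j
    by_cases hj : y ∈ Ioc (j * c⁻¹) ((j + 1) * c⁻¹)
    · rw [indicator_of_mem hj,
        if_pos (eq_of_mem_Ioc_natCast_mul (inv_pos.2 hc) hj hy)]
    · rw [indicator_of_notMem hj, if_neg]
      rintro rfl
      exact hj hy
  have hterm : ∀ i : ℕ,
      (Ioc ((2 * (i : ℝ)) / c) ((2 * (i : ℝ) + 1) / c)).indicator (fun _ => (1 : ℝ)) y
        - (Ioc ((2 * (i : ℝ) + 1) / c) ((2 * (i : ℝ) + 2) / c)).indicator (fun _ => (1 : ℝ)) y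
      = (if 2 * i = k then 1 else 0) - (if 2 * i + 1 = k then 1 else 0) := by
    intro i
    rw [← hcell, ← hcell]
    push_cast
    ring_nf
  simp only [hterm]
  -- only the term `i = k / 2` survives
  rw [tsum_eq_single (k / 2)]
  · rcases Nat.even_or_odd' k with ⟨m, rfl | rfl⟩
    · simp [pow_mul]
    · rw [if_neg (by omega), if_pos (by omega)]
      simp [pow_succ, pow_mul]
  · intro i hi
    rw [if_neg (by omega), if_neg (by omega), sub_zero]

theorem stmt10 (θ : ℝ) (hθ : θ ∈ Set.Ioo (0 : ℝ) 1) (n : ℕ)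
    (rn : ℝ → ℝ)
    (hrn : ∀ y : ℝ, rn y =
      ∑' i : ℕ,
        ((Set.Ioc ((2 * (i : ℝ)) / 2 ^ (n + 1)) ((2 * (i : ℝ) + 1) / 2 ^ (n + 1))).indicator
            (fun _ => (1 : ℝ)) y
          - (Set.Ioc ((2 * (i : ℝ) + 1) / 2 ^ (n + 1)) ((2 * (i : ℝ) + 2) / 2 ^ (n + 1))).indicator
            (fun _ => (1 : ℝ)) y))
    (S : ℝ → ℝ)
    (hS : ∀ x : ℝ, S x = (2 : ℝ) ^ (-((n : ℝ) + 1) * (θ - 1)) * ∫ y in Set.Ioc 0 |x|, rn y) :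
    sSup {v : ℝ | ∃ x y : ℝ, x ≠ y ∧ v = |S x - S y| / |x - y| ^ θ} = 1 := by
  set h : ℝ := (2 ^ (n + 1))⁻¹
  have hh : 0 < h := by positivity
  have hr : IsSquareWave rn h := fun k y hy =>
    (hrn y).trans (tsum_indicator_sub_indicator_eq_neg_one_pow (by positivity) hy)
  have hS' : ∀ x, S x = h ^ (θ - 1) * ∫ y in (0 : ℝ)..|x|, rn y := fun x => by
    rw [hS, integral_of_le (abs_nonneg x), Real.rpow_mul zero_le_two, Real.rpow_neg zero_le_two,
      ← Nat.cast_succ, Real.rpow_natCast]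
  have hFh : ∫ y in (0 : ℝ)..h, rn y = h := by
    simpa using hr.integral_zero_natCast_mul hh 1
  refine sSup_abs_sub_div_rpow_eq_one hh hθ.1.le hθ.2.le (fun x y => ?_) (by simp [hS']) ?_
  · rw [hS', hS', ← mul_sub, abs_mul, abs_of_pos (Real.rpow_pos_of_pos hh _)]
    gcongr
    exact (hr.abs_integral_zero_sub_le_min hh (abs_nonneg y) (abs_nonneg x)).trans
      (min_le_min_left h (abs_abs_sub_abs_le_abs_sub x y))
  · rw [hS', abs_of_pos hh, hFh, ← Real.rpow_add_one hh.ne', sub_add_cancel]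
end
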